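/- Let I ⊆ ℝ be an interval, p ∈ ℕ, d ∈ ℕᵖ, α ∈ ℕ_p^d, and let 𝐌 = (M₁,…,M_p) be a d-averaging mapping on I with each Mᵢ continuous and strict. If the root graph 𝓡(G_α) of the incidence graph G_α is ergodic, then there exists a unique 𝐌_α-invariant mean K_α : Iᵖ → I; K_α is continuous; the iterates 𝐌_αⁿ converge pointwise on Iᵖ to 𝐊_α := (K_α,…,K_α); and K_α depends only on the root coordinates, i.e., there exists a mean K_α* : I^{|R(G_α)|} → I with K_α(x₁,…,x_p) = K_α*(xᵢ : i ∈ R(G_α)) for all x ∈ Iᵖ. -/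
import Mathlib


/-- There is a walk of length exactly `n` from `v` to `w` in the digraph with edge relation `E`. -/
def HasWalkOfLength {V : Type*} (E : V → V → Prop) (v w : V) (n : ℕ) : Prop :=
  ∃ f : ℕ → V, f 0 = v ∧ f n = w ∧ ∀ i < n, E (f i) (f (i + 1))

/-- `v ⇝ w` : there is a walk (of some length, possibly `0`) from `v` to `w`. -/
def Reaches {V : Type*} (E : V → V → Prop) : V → V → Prop :=
  Relation.ReflTransGen E

/-- The equivalence relation whose classes are the strongly connected components:
`v ∼ w` iff there are walks from `v` to `w` and from `w` to `v`. -/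
def SCCSetoid {V : Type*} (E : V → V → Prop) : Setoid V where
  r v w := Reaches E v w ∧ Reaches E w v
  iseqv := ⟨fun _ => ⟨Relation.ReflTransGen.refl, Relation.ReflTransGen.refl⟩,
    fun h => ⟨h.2, h.1⟩,
    fun h h' => ⟨Relation.ReflTransGen.trans h.1 h'.1, Relation.ReflTransGen.trans h'.2 h.2⟩⟩

/-- The edge relation of the quotient digraph `G^SCC` of strongly connected components :
`(P, Q)` is an edge iff `P ≠ Q` and there is an edge `(a, b) ∈ E` with `a ∈ P`, `b ∈ Q`. -/
def SCCEdge {V : Type*} (E : V → V → Prop) (P Q : Quotient (SCCSetoid E)) : Prop :=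
  P ≠ Q ∧ ∃ a b : V, Quotient.mk (SCCSetoid E) a = P ∧ Quotient.mk (SCCSetoid E) b = Q ∧ E a b

/-- The root `R(G)`: the union of the strongly connected components having no
incoming edge in `G^SCC` (i.e. lying in the source of `G^SCC`). -/
def Root {V : Type*} (E : V → V → Prop) : Set V :=
  {v | ∀ P, ¬ SCCEdge E P (Quotient.mk (SCCSetoid E) v)}

/-- `f` restricted to `{0,…,n}` is a cycle: a nonempty walk in which only the first and
last vertices are equal. -/
def IsCycle {V : Type*} (E : V → V → Prop) (f : ℕ → V) (n : ℕ) : Prop :=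
  0 < n ∧ (∀ i < n, E (f i) (f (i + 1))) ∧ f 0 = f n ∧
    ∀ i j, i < j → j ≤ n → f i = f j → i = 0 ∧ j = n

/-- A digraph is aperiodic if no integer `k > 1` divides the length of every cycle. -/
def IsAperiodic {V : Type*} (E : V → V → Prop) : Prop :=
  ¬ ∃ k : ℕ, 1 < k ∧ ∀ (f : ℕ → V) (n : ℕ), IsCycle E f n → k ∣ n

/-- A digraph is ergodic if it is nonempty, irreducible and aperiodic. -/
def IsErgodic {V : Type*} (E : V → V → Prop) : Prop :=
  Nonempty V ∧ (∀ v w : V, Reaches E v w) ∧ IsAperiodic E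

/-- `M` is a mean on the interval `I ⊆ ℝ` (indexed by the finite index type `ι`):
`min x ≤ M x ≤ max x` for every `x : ι → I`. -/
def IsMeanOn (I : Set ℝ) {ι : Type*} [Fintype ι] (M : (ι → I) → I) : Prop :=
  ∀ (x : ι → I) (h : (Finset.univ : Finset ι).Nonempty),
    Finset.univ.inf' h (fun i => (x i : ℝ)) ≤ (M x : ℝ) ∧
      (M x : ℝ) ≤ Finset.univ.sup' h (fun i => (x i : ℝ))

/-- `M` is a strict mean on `I`: it is a mean, and `min x < M x < max x`
whenever `x` is nonconstant. -/
def IsStrictMeanOn (I : Set ℝ) {ι : Type*} [Fintype ι] (M : (ι → I) → I) : Prop :=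
  IsMeanOn I M ∧ ∀ (x : ι → I) (h : (Finset.univ : Finset ι).Nonempty),
    (∃ i j, x i ≠ x j) →
      Finset.univ.inf' h (fun i => (x i : ℝ)) < (M x : ℝ) ∧
        (M x : ℝ) < Finset.univ.sup' h (fun i => (x i : ℝ))

/-- The mean-type mapping `𝐌_α : Iᵖ → Iᵖ`, whose `i`-th coordinate is
`Mᵢ(x_{α_{i,1}}, …, x_{α_{i,dᵢ}})`. -/
def MeanTypeMap {I : Set ℝ} {p : ℕ} (d : Fin p → ℕ) (M : ∀ i, (Fin (d i) → I) → I)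
    (α : ∀ i, Fin (d i) → Fin p) : (Fin p → I) → (Fin p → I) :=
  fun x i => M i fun j => x (α i j)

/-- The edge relation of the α-incidence graph `G_α` on `{1,…,p}`:
edges are the pairs `(α_{i,j}, i)`. -/
def IncidenceE {p : ℕ} (d : Fin p → ℕ) (α : ∀ i, Fin (d i) → Fin p) :
    Fin p → Fin p → Prop :=
  fun a b => ∃ j : Fin (d b), α b j = a

attribute [local instance] Classical.propDecidable

section Walks
variable {V : Type*} {E : V → V → Prop}

theorem hwol_refl (v : V) : HasWalkOfLength E v v 0 :=
  ⟨fun _ => v, rfl, rfl, fun i hi => absurd hi (Nat.not_lt_zero i)⟩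

theorem hwol_single {u v : V} (h : E u v) : HasWalkOfLength E u v 1 := by
  refine ⟨fun i => if i = 0 then u else v, by simp, by simp, ?_⟩
  intro i hi
  interval_cases i
  simpa using h

theorem hwol_concat {u v w : V} {m n : ℕ} (h1 : HasWalkOfLength E u v m)
    (h2 : HasWalkOfLength E v w n) : HasWalkOfLength E u w (m + n) := by
  obtain ⟨f, hf0, hfm, hfe⟩ := h1
  obtain ⟨g, hg0, hgn, hge⟩ := h2
  refine ⟨fun i => if i ≤ m then f i else g (i - m), by simp [hf0], ?_, ?_⟩
  · rcases Nat.eq_zero_or_pos n with hn0 | hn0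
    · subst hn0
      simp only [Nat.add_zero, le_refl, if_pos, hfm]
      rw [← hg0]; exact hgn
    · have h : ¬ m + n ≤ m := by omega
      simp only [if_neg h]
      have : m + n - m = n := by omega
      rw [this, hgn]
  · intro i hi
    dsimp only
    by_cases h : i + 1 ≤ m
    · simp only [if_pos (by omega : i ≤ m), if_pos h]
      exact hfe i (by omega)
    · by_cases h' : i ≤ m
      · have him : i = m := by omega
        subst him
        rw [if_pos (le_refl i), if_neg h, hfm, ← hg0]
        have h2 : i + 1 - i = 0 + 1 := by omega
        rw [h2]
        exact hge 0 (by omega)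
      · simp only [if_neg h', if_neg h]
        have h2 : i + 1 - m = (i - m) + 1 := by omega
        rw [h2]
        exact hge (i - m) (by omega)

theorem exists_hwol_of_reaches {u v : V} (h : Reaches E u v) :
    ∃ n, HasWalkOfLength E u v n := by
  induction h with
  | refl => exact ⟨0, hwol_refl u⟩
  | tail _ hbc ih =>
    obtain ⟨n, hn⟩ := ih
    exact ⟨n + 1, hwol_concat hn (hwol_single hbc)⟩

end Walks
section Numerics

theorem nsmul_mem_of_addclosed {S : Set ℕ} (hadd : ∀ a ∈ S, ∀ b ∈ S, a + b ∈ S)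
    {s : ℕ} (hs : s ∈ S) : ∀ m, 1 ≤ m → m * s ∈ S := by
  intro m hm
  induction m with
  | zero => omega
  | succ k ih =>
    rcases Nat.eq_zero_or_pos k with hk | hk
    · subst hk; simpa using hs
    · have := hadd _ (ih hk) _ hs
      simpa [Nat.succ_mul] using this

theorem semigroup_cofinite {S : Set ℕ} (hadd : ∀ a ∈ S, ∀ b ∈ S, a + b ∈ S)
    (hk : ∀ k, 1 < k → ∃ s ∈ S, ¬ k ∣ s) : ∃ N, ∀ n ≥ N, n ∈ S := by
  -- the subgroup of differences
  classical
  obtain ⟨s₀, hs₀S, hs₀odd⟩ := hk 2 one_lt_two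
  have hs₀pos : 0 < s₀ := by
    rcases Nat.eq_zero_or_pos s₀ with h | h
    · exact absurd (h ▸ dvd_zero 2) hs₀odd
    · exact h
  set S' : Set ℕ := S ∪ {0} with hS'
  have hS'add : ∀ a ∈ S', ∀ b ∈ S', a + b ∈ S' := by
    rintro a (ha | ha) b (hb | hb)
    · exact Or.inl (hadd a ha b hb)
    · simp only [Set.mem_singleton_iff] at hb; subst hb; exact Or.inl (by simpa using ha)
    · simp only [Set.mem_singleton_iff] at ha; subst ha; exact Or.inl (by simpa using hb)
    · simp only [Set.mem_singleton_iff] at ha hb; subst ha; subst hb; exact Or.inr rfl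
  have h0S' : (0 : ℕ) ∈ S' := Or.inr rfl
  let G : AddSubgroup ℤ :=
    { carrier := {z : ℤ | ∃ a ∈ S', ∃ b ∈ S', z = (a : ℤ) - b}
      zero_mem' := ⟨0, h0S', 0, h0S', by simp⟩
      add_mem' := by
        rintro x y ⟨a, ha, b, hb, rfl⟩ ⟨c, hc, d, hd, rfl⟩
        exact ⟨a + c, hS'add a ha c hc, b + d, hS'add b hb d hd, by push_cast; ring⟩
      neg_mem' := by
        rintro x ⟨a, ha, b, hb, rfl⟩
        exact ⟨b, hb, a, ha, by ring⟩ }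
  obtain ⟨g, hG⟩ := Int.subgroup_cyclic G
  have hmemS : ∀ s ∈ S', (s : ℤ) ∈ G := fun s hs => ⟨s, hs, 0, h0S', by simp⟩
  have hdvd : ∀ s ∈ S', g ∣ (s : ℤ) := by
    intro s hs
    have := hmemS s hs
    rw [hG, AddSubgroup.mem_closure_singleton] at this
    obtain ⟨n, hn⟩ := this
    exact ⟨n, by rw [← hn, smul_eq_mul, mul_comm]⟩
  have hnatdvd : ∀ s ∈ S', g.natAbs ∣ s := by
    intro s hs
    have := (Int.natAbs_dvd_natAbs).mpr (hdvd s hs)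
    simpa using this
  have hgone : g.natAbs = 1 := by
    rcases Nat.lt_or_ge g.natAbs 2 with h | h
    · interval_cases h' : g.natAbs
      · exfalso
        have h0 : (0:ℕ) ∣ s₀ := hnatdvd s₀ (Or.inl hs₀S)
        have := Nat.eq_zero_of_zero_dvd h0
        omega
      · rfl
    · exfalso
      obtain ⟨s, hsS, hnd⟩ := hk g.natAbs h
      exact hnd (hnatdvd s (Or.inl hsS))
  -- get consecutive elements
  have h1G : (1 : ℤ) ∈ G := by
    rw [hG, AddSubgroup.mem_closure_singleton]
    rcases Int.natAbs_eq_iff.mp hgone with h | h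
    · exact ⟨1, by simp [h]⟩
    · exact ⟨-1, by simp [h]⟩
  obtain ⟨a, haS, b, hbS, hab⟩ := h1G
  have hab' : a = b + 1 := by omega
  -- if 1 ∈ S, done
  have done1 : (1 : ℕ) ∈ S → ∃ N, ∀ n ≥ N, n ∈ S := by
    intro h1
    refine ⟨1, fun n hn => ?_⟩
    have := nsmul_mem_of_addclosed hadd h1 n hn
    simpa using this
  rcases Nat.eq_zero_or_pos b with hb0 | hbpos
  · subst hb0
    apply done1
    rcases haS with h | h
    · rwa [hab'] at h
    · simp only [Set.mem_singleton_iff] at h; omega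
  -- now b ≥ 1, b ∈ S, b+1 ∈ S
  have hbS' : b ∈ S := by
    rcases hbS with h | h
    · exact h
    · simp only [Set.mem_singleton_iff] at h; omega
  have haS' : b + 1 ∈ S := by
    rcases haS with h | h
    · rwa [hab'] at h
    · simp only [Set.mem_singleton_iff] at h; omega
  refine ⟨b * b, fun n hn => ?_⟩
  set q := n / b with hq
  set r := n % b with hr
  have hdm : b * q + r = n := Nat.div_add_mod n b
  have hrb : r < b := Nat.mod_lt n hbpos
  have hqb : b ≤ q := by
    rw [hq]
    exact (Nat.le_div_iff_mul_le hbpos).mpr (by nlinarith)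
  have hkey : n = r * (b + 1) + (q - r) * b := by
    have : q - r + r = q := by omega
    nlinarith [this]
  rcases Nat.eq_zero_or_pos r with hr0 | hrpos
  · rw [hkey, hr0]
    simpa using nsmul_mem_of_addclosed hadd hbS' (q - 0) (by omega)
  · rw [hkey]
    exact hadd _ (nsmul_mem_of_addclosed hadd haS' r hrpos) _
      (nsmul_mem_of_addclosed hadd hbS' (q - r) (by omega))

end Numerics
section SCC
variable {V : Type*} {E : V → V → Prop}

local notation "mk" => Quotient.mk (SCCSetoid E)

theorem reaches_of_sccRTG : ∀ {P Q : Quotient (SCCSetoid E)},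
    Relation.ReflTransGen (SCCEdge E) P Q →
    ∀ u v : V, mk u = P → mk v = Q → Reaches E u v := by
  intro P Q h
  induction h with
  | refl =>
    intro u v hu hv
    have : (SCCSetoid E).r u v := Quotient.exact (hu.trans hv.symm)
    exact this.1
  | tail _ hbc ih =>
    intro u v hu hv
    obtain ⟨hne, a, b, ha, hb, hab⟩ := hbc
    have h1 : Reaches E u a := ih u a hu ha
    have h2 : Reaches E b v := ((Quotient.exact (hb.trans hv.symm)) :
      (SCCSetoid E).r b v).1
    exact Relation.ReflTransGen.trans h1
      (Relation.ReflTransGen.trans (Relation.ReflTransGen.single hab) h2)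

theorem sccRTG_antisymm {P Q : Quotient (SCCSetoid E)}
    (h1 : Relation.ReflTransGen (SCCEdge E) P Q)
    (h2 : Relation.ReflTransGen (SCCEdge E) Q P) : P = Q := by
  obtain ⟨u, hu⟩ := Quotient.exists_rep P
  obtain ⟨v, hv⟩ := Quotient.exists_rep Q
  have r1 := reaches_of_sccRTG h1 u v hu hv
  have r2 := reaches_of_sccRTG h2 v u hv hu
  rw [← hu, ← hv]
  exact Quotient.sound ⟨r1, r2⟩

theorem no_sccTransGen_self {P : Quotient (SCCSetoid E)} :
    ¬ Relation.TransGen (SCCEdge E) P P := by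
  intro h
  obtain ⟨S, hPS, hSP⟩ := Relation.TransGen.head'_iff.mp h
  have : P = S := sccRTG_antisymm (Relation.ReflTransGen.single hPS) hSP
  exact hPS.1 this

theorem root_closed_pred {u v : V} (hv : v ∈ Root E) (h : E u v) : u ∈ Root E := by
  intro P hP
  by_cases huv : (mk u : Quotient (SCCSetoid E)) = mk v
  · exact hv P (huv ▸ hP)
  · exact hv (mk u) ⟨huv, u, v, rfl, rfl, h⟩

theorem exists_root_reaches [Fintype V] (v : V) :
    ∃ r ∈ Root E, Reaches E r v := by
  classical
  suffices h : ∀ (Q : Quotient (SCCSetoid E)),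
      ∃ R, Relation.ReflTransGen (SCCEdge E) R Q ∧ ∀ S, ¬ SCCEdge E S R by
    obtain ⟨R, hRQ, hR⟩ := h (mk v)
    obtain ⟨r, hr⟩ := Quotient.exists_rep R
    exact ⟨r, fun P hP => hR P (hr ▸ hP), reaches_of_sccRTG hRQ r v hr rfl⟩
  intro Q
  set pred : Quotient (SCCSetoid E) → Finset (Quotient (SCCSetoid E)) :=
    fun P => Finset.univ.filter (fun R => Relation.TransGen (SCCEdge E) R P) with hpred
  have : ∀ n (Q : Quotient (SCCSetoid E)), (pred Q).card ≤ n →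
      ∃ R, Relation.ReflTransGen (SCCEdge E) R Q ∧ ∀ S, ¬ SCCEdge E S R := by
    intro n
    induction n with
    | zero =>
      intro Q hQ
      refine ⟨Q, Relation.ReflTransGen.refl, fun S hS => ?_⟩
      have : S ∈ pred Q := by
        simp only [hpred, Finset.mem_filter, Finset.mem_univ, true_and]
        exact Relation.TransGen.single hS
      simp only [Nat.le_zero, Finset.card_eq_zero] at hQ
      rw [hQ] at this
      exact absurd this (Finset.notMem_empty S)
    | succ n ih =>
      intro Q hQ
      by_cases hsrc : ∀ S, ¬ SCCEdge E S Q
      · exact ⟨Q, Relation.ReflTransGen.refl, hsrc⟩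
      · push_neg at hsrc
        obtain ⟨S, hS⟩ := hsrc
        have hsub : pred S ⊂ pred Q := by
          constructor
          · intro R hR
            simp only [hpred, Finset.mem_filter, Finset.mem_univ, true_and] at hR ⊢
            exact hR.tail hS
          · intro hcon
            have hSin : S ∈ pred Q := by
              simp only [hpred, Finset.mem_filter, Finset.mem_univ, true_and]
              exact Relation.TransGen.single hS
            have := hcon hSin
            simp only [hpred, Finset.mem_filter, Finset.mem_univ, true_and] at this
            exact no_sccTransGen_self this
        have hcard : (pred S).card ≤ n := by
          have := Finset.card_lt_card hsub
          omega
        obtain ⟨R, hRS, hR⟩ := ih S hcard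
        exact ⟨R, hRS.tail hS, hR⟩
  exact this (pred Q).card Q le_rfl
end SCC
section Ergodic
variable {V : Type*} {E : V → V → Prop}

theorem ergodic_uniform_walk [Fintype V] (hirr : ∀ v w : V, Reaches E v w)
    (haper : IsAperiodic E) :
    ∃ N₀, ∀ v w : V, ∀ n ≥ N₀, HasWalkOfLength E v w n := by
  classical
  unfold IsAperiodic at haper
  push_neg at haper
  have hloop : ∀ v : V, ∃ Nv, ∀ n ≥ Nv, HasWalkOfLength E v v n := by
    intro v
    set S : Set ℕ := {n | HasWalkOfLength E v v n} with hS
    have hadd : ∀ a ∈ S, ∀ b ∈ S, a + b ∈ S := fun a ha b hb => hwol_concat ha hb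
    have hk : ∀ k, 1 < k → ∃ s ∈ S, ¬ k ∣ s := by
      intro k hk1
      obtain ⟨f, c, hcyc, hnd⟩ := haper k hk1
      set w := f 0 with hw
      have hcw : HasWalkOfLength E w w c := ⟨f, rfl, hcyc.2.2.1.symm, hcyc.2.1⟩
      obtain ⟨l₁, h1⟩ := exists_hwol_of_reaches (hirr v w)
      obtain ⟨l₂, h2⟩ := exists_hwol_of_reaches (hirr w v)
      have hs₁ : l₁ + l₂ ∈ S := hwol_concat h1 h2
      have hs₂ : l₁ + (c + l₂) ∈ S := hwol_concat h1 (hwol_concat hcw h2)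
      by_cases hd1 : k ∣ l₁ + l₂
      · refine ⟨l₁ + (c + l₂), hs₂, fun hd2 => ?_⟩
        have hc : l₁ + (c + l₂) - (l₁ + l₂) = c := by omega
        exact hnd (hc ▸ Nat.dvd_sub hd2 hd1)
      · exact ⟨l₁ + l₂, hs₁, hd1⟩
    obtain ⟨N, hN⟩ := semigroup_cofinite hadd hk
    exact ⟨N, fun n hn => hN n hn⟩
  choose Nf hNf using hloop
  have hreach : ∀ v w : V, ∃ l, HasWalkOfLength E v w l :=
    fun v w => exists_hwol_of_reaches (hirr v w)
  choose L hL using hreach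
  rcases isEmpty_or_nonempty V with hV | hV
  · exact ⟨0, fun v => (hV.false v).elim⟩
  refine ⟨Finset.univ.sup Nf + Finset.univ.sup (fun v => Finset.univ.sup (L v)),
    fun v w n hn => ?_⟩
  have h1 : Nf v ≤ Finset.univ.sup Nf := Finset.le_sup (Finset.mem_univ v)
  have h2 : L v w ≤ Finset.univ.sup (fun v => Finset.univ.sup (L v)) :=
    le_trans (Finset.le_sup (Finset.mem_univ w))
      (Finset.le_sup (f := fun v => Finset.univ.sup (L v)) (Finset.mem_univ v))
  have hwalk : HasWalkOfLength E v v (n - L v w) := hNf v _ (by omega)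
  have := hwol_concat hwalk (hL v w)
  have heq : n - L v w + L v w = n := by omega
  rwa [heq] at this

end Ergodic
section Dyn
open Filter Finset

variable {I : Set ℝ} {p : ℕ} {d : Fin p → ℕ}
  {M : ∀ i, (Fin (d i) → I) → I} {α : ∀ i, Fin (d i) → Fin p}

theorem dyn_step_le (hne : (Finset.univ : Finset (Fin p)).Nonempty)
    (hd : ∀ i, 0 < d i) (hstrict : ∀ i, IsStrictMeanOn I (M i))
    (x : Fin p → I) (v : Fin p) :
    (MeanTypeMap d M α x v : ℝ) ≤ univ.sup' hne (fun i => (x i : ℝ)) := by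
  have hne' : (univ : Finset (Fin (d v))).Nonempty := ⟨⟨0, hd v⟩, mem_univ _⟩
  have h := ((hstrict v).1 (fun j => x (α v j)) hne').2
  exact le_trans h (Finset.sup'_le _ _ fun j _ =>
    Finset.le_sup' (fun i => ((x i : ℝ))) (mem_univ (α v j)))

theorem dyn_step_ge (hne : (Finset.univ : Finset (Fin p)).Nonempty)
    (hd : ∀ i, 0 < d i) (hstrict : ∀ i, IsStrictMeanOn I (M i))
    (x : Fin p → I) (v : Fin p) :
    univ.inf' hne (fun i => (x i : ℝ)) ≤ (MeanTypeMap d M α x v : ℝ) := by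
  have hne' : (univ : Finset (Fin (d v))).Nonempty := ⟨⟨0, hd v⟩, mem_univ _⟩
  have h := ((hstrict v).1 (fun j => x (α v j)) hne').1
  refine le_trans ?_ h
  exact Finset.le_inf' _ _ fun j _ =>
    Finset.inf'_le (fun i => ((x i : ℝ))) (mem_univ (α v j))

theorem dyn_sup_anti (hne : (Finset.univ : Finset (Fin p)).Nonempty)
    (hd : ∀ i, 0 < d i) (hstrict : ∀ i, IsStrictMeanOn I (M i)) (x : Fin p → I) :
    Antitone (fun n => univ.sup' hne (fun i => (((MeanTypeMap d M α)^[n] x) i : ℝ))) := by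
  apply antitone_nat_of_succ_le
  intro n
  rw [Function.iterate_succ_apply']
  exact Finset.sup'_le _ _ fun v _ => dyn_step_le hne hd hstrict _ v

theorem dyn_inf_mono (hne : (Finset.univ : Finset (Fin p)).Nonempty)
    (hd : ∀ i, 0 < d i) (hstrict : ∀ i, IsStrictMeanOn I (M i)) (x : Fin p → I) :
    Monotone (fun n => univ.inf' hne (fun i => (((MeanTypeMap d M α)^[n] x) i : ℝ))) := by
  apply monotone_nat_of_le_succ
  intro n
  rw [Function.iterate_succ_apply']
  exact Finset.le_inf' _ _ fun v _ => dyn_step_ge hne hd hstrict _ v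

theorem dyn_force_sup (hne : (Finset.univ : Finset (Fin p)).Nonempty)
    (hd : ∀ i, 0 < d i) (hstrict : ∀ i, IsStrictMeanOn I (M i))
    (x : Fin p → I) (v : Fin p)
    (h : univ.sup' hne (fun i => (x i : ℝ)) ≤ (MeanTypeMap d M α x v : ℝ)) :
    ∀ j, (x (α v j) : ℝ) = univ.sup' hne (fun i => (x i : ℝ)) := by
  set S := univ.sup' hne (fun i => (x i : ℝ)) with hS
  have hne' : (univ : Finset (Fin (d v))).Nonempty := ⟨⟨0, hd v⟩, mem_univ _⟩
  set s' := univ.sup' hne' (fun j => (x (α v j) : ℝ)) with hs'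
  have h1 : s' ≤ S := Finset.sup'_le _ _ fun j _ =>
    Finset.le_sup' (fun i => ((x i : ℝ))) (mem_univ (α v j))
  have h2 : (MeanTypeMap d M α x v : ℝ) ≤ s' := ((hstrict v).1 (fun j => x (α v j)) hne').2
  have heq : s' = S := le_antisymm h1 (le_trans h h2)
  by_contra hcon
  push_neg at hcon
  obtain ⟨j₀, hj₀⟩ := hcon
  have hnonconst : ∃ j j', (fun j => x (α v j)) j ≠ (fun j => x (α v j)) j' := by
    by_contra hc
    push_neg at hc
    obtain ⟨j₁, _, hj₁⟩ := Finset.exists_mem_eq_sup' hne' (fun j => (x (α v j) : ℝ))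
    apply hj₀
    rw [← heq, hs', hj₁]
    exact congrArg _ (hc j₀ j₁)
  have := ((hstrict v).2 (fun j => x (α v j)) hne' hnonconst).2
  rw [← hs', heq] at this
  exact absurd this (not_lt.mpr h)

theorem dyn_force_inf (hne : (Finset.univ : Finset (Fin p)).Nonempty)
    (hd : ∀ i, 0 < d i) (hstrict : ∀ i, IsStrictMeanOn I (M i))
    (x : Fin p → I) (v : Fin p)
    (h : (MeanTypeMap d M α x v : ℝ) ≤ univ.inf' hne (fun i => (x i : ℝ))) :
    ∀ j, (x (α v j) : ℝ) = univ.inf' hne (fun i => (x i : ℝ)) := by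
  set S := univ.inf' hne (fun i => (x i : ℝ)) with hS
  have hne' : (univ : Finset (Fin (d v))).Nonempty := ⟨⟨0, hd v⟩, mem_univ _⟩
  set s' := univ.inf' hne' (fun j => (x (α v j) : ℝ)) with hs'
  have h1 : S ≤ s' := Finset.le_inf' _ _ fun j _ =>
    Finset.inf'_le (fun i => ((x i : ℝ))) (mem_univ (α v j))
  have h2 : s' ≤ (MeanTypeMap d M α x v : ℝ) := ((hstrict v).1 (fun j => x (α v j)) hne').1
  have heq : s' = S := le_antisymm (le_trans h2 h) h1
  by_contra hcon
  push_neg at hcon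
  obtain ⟨j₀, hj₀⟩ := hcon
  have hnonconst : ∃ j j', (fun j => x (α v j)) j ≠ (fun j => x (α v j)) j' := by
    by_contra hc
    push_neg at hc
    obtain ⟨j₁, _, hj₁⟩ := Finset.exists_mem_eq_inf' hne' (fun j => (x (α v j) : ℝ))
    apply hj₀
    rw [← heq, hs', hj₁]
    exact congrArg _ (hc j₀ j₁)
  have := ((hstrict v).2 (fun j => x (α v j)) hne' hnonconst).1
  rw [← hs', heq] at this
  exact absurd this (not_lt.mpr h)

theorem dyn_walk_sup (hne : (Finset.univ : Finset (Fin p)).Nonempty)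
    (hd : ∀ i, 0 < d i) (hstrict : ∀ i, IsStrictMeanOn I (M i)) :
    ∀ (n : ℕ) (x : Fin p → I) (v w : Fin p),
    univ.sup' hne (fun i => (x i : ℝ)) ≤ (((MeanTypeMap d M α)^[n] x) v : ℝ) →
    HasWalkOfLength (IncidenceE d α) w v n →
    (x w : ℝ) = univ.sup' hne (fun i => (x i : ℝ)) := by
  intro n
  induction n with
  | zero =>
    intro x v w h hw
    obtain ⟨f, hf0, hfn, _⟩ := hw
    have hwv : w = v := hf0 ▸ hfn
    subst hwv
    simp only [Function.iterate_zero, id_eq] at h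
    exact le_antisymm (Finset.le_sup' (fun i => ((x i : ℝ))) (mem_univ w)) h
  | succ n ih =>
    intro x v w h hw
    set y := (MeanTypeMap d M α)^[n] x with hy
    have hyv : ((MeanTypeMap d M α)^[n + 1] x) v = MeanTypeMap d M α y v := by
      rw [Function.iterate_succ_apply']
    rw [hyv] at h
    have hsupy : univ.sup' hne (fun i => (y i : ℝ)) ≤ univ.sup' hne (fun i => (x i : ℝ)) := by
      have := dyn_sup_anti (α := α) hne hd hstrict x (Nat.zero_le n)
      simpa using this
    have hstep : (MeanTypeMap d M α y v : ℝ) ≤ univ.sup' hne (fun i => (y i : ℝ)) :=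
      dyn_step_le hne hd hstrict y v
    have heqy : univ.sup' hne (fun i => (y i : ℝ)) = univ.sup' hne (fun i => (x i : ℝ)) :=
      le_antisymm hsupy (le_trans h hstep)
    have hforce := dyn_force_sup hne hd hstrict y v (by rw [heqy]; exact h)
    obtain ⟨f, hf0, hfn, hfe⟩ := hw
    have hlast := hfe n (Nat.lt_succ_self n)
    rw [hfn] at hlast
    obtain ⟨j, hj⟩ := hlast
    have hyfn : (y (f n) : ℝ) = univ.sup' hne (fun i => (x i : ℝ)) := by
      rw [← hj, hforce j, heqy]
    have hwalk' : HasWalkOfLength (IncidenceE d α) w (f n) n :=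
      ⟨f, hf0, rfl, fun i hi => hfe i (by omega)⟩
    exact ih x (f n) w (le_of_eq hyfn.symm) hwalk'

theorem dyn_walk_inf (hne : (Finset.univ : Finset (Fin p)).Nonempty)
    (hd : ∀ i, 0 < d i) (hstrict : ∀ i, IsStrictMeanOn I (M i)) :
    ∀ (n : ℕ) (x : Fin p → I) (v w : Fin p),
    (((MeanTypeMap d M α)^[n] x) v : ℝ) ≤ univ.inf' hne (fun i => (x i : ℝ)) →
    HasWalkOfLength (IncidenceE d α) w v n →
    (x w : ℝ) = univ.inf' hne (fun i => (x i : ℝ)) := by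
  intro n
  induction n with
  | zero =>
    intro x v w h hw
    obtain ⟨f, hf0, hfn, _⟩ := hw
    have hwv : w = v := hf0 ▸ hfn
    subst hwv
    simp only [Function.iterate_zero, id_eq] at h
    exact le_antisymm h (Finset.inf'_le (fun i => ((x i : ℝ))) (mem_univ w))
  | succ n ih =>
    intro x v w h hw
    set y := (MeanTypeMap d M α)^[n] x with hy
    have hyv : ((MeanTypeMap d M α)^[n + 1] x) v = MeanTypeMap d M α y v := by
      rw [Function.iterate_succ_apply']
    rw [hyv] at h
    have hinfy : univ.inf' hne (fun i => (x i : ℝ)) ≤ univ.inf' hne (fun i => (y i : ℝ)) := by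
      have := dyn_inf_mono (α := α) hne hd hstrict x (Nat.zero_le n)
      simpa using this
    have hstep : univ.inf' hne (fun i => (y i : ℝ)) ≤ (MeanTypeMap d M α y v : ℝ) :=
      dyn_step_ge hne hd hstrict y v
    have heqy : univ.inf' hne (fun i => (y i : ℝ)) = univ.inf' hne (fun i => (x i : ℝ)) :=
      le_antisymm (le_trans hstep h) hinfy
    have hforce := dyn_force_inf hne hd hstrict y v (by rw [heqy]; exact h)
    obtain ⟨f, hf0, hfn, hfe⟩ := hw
    have hlast := hfe n (Nat.lt_succ_self n)
    rw [hfn] at hlast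
    obtain ⟨j, hj⟩ := hlast
    have hyfn : (y (f n) : ℝ) = univ.inf' hne (fun i => (x i : ℝ)) := by
      rw [← hj, hforce j, heqy]
    have hwalk' : HasWalkOfLength (IncidenceE d α) w (f n) n :=
      ⟨f, hf0, rfl, fun i hi => hfe i (by omega)⟩
    exact ih x (f n) w (le_of_eq hyfn) hwalk'

end Dyn
section Dyn2
open Filter Finset

variable {I : Set ℝ} {p : ℕ} {d : Fin p → ℕ}
  {M : ∀ i, (Fin (d i) → I) → I} {α : ∀ i, Fin (d i) → Fin p}

theorem my_inf'_le_sup' {ι : Type*} [Fintype ι] (hne : (Finset.univ : Finset ι).Nonempty)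
    (f : ι → ℝ) : univ.inf' hne f ≤ univ.sup' hne f := by
  obtain ⟨i, hi⟩ := hne
  exact le_trans (Finset.inf'_le f hi) (Finset.le_sup' f hi)

theorem dyn_contract (hne : (Finset.univ : Finset (Fin p)).Nonempty)
    (hd : ∀ i, 0 < d i) (hstrict : ∀ i, IsStrictMeanOn I (M i))
    (w₀ : Fin p) (hw₀ : w₀ ∈ Root (IncidenceE d α)) (N : ℕ)
    (hN : ∀ w ∈ Root (IncidenceE d α), ∀ v, HasWalkOfLength (IncidenceE d α) w v N)
    (x : Fin p → I)
    (hx : univ.inf' hne (fun i => (x i : ℝ)) < univ.sup' hne (fun i => (x i : ℝ))) :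
    univ.sup' hne (fun i => (((MeanTypeMap d M α)^[N] x) i : ℝ)) -
      univ.inf' hne (fun i => (((MeanTypeMap d M α)^[N] x) i : ℝ)) <
    univ.sup' hne (fun i => (x i : ℝ)) - univ.inf' hne (fun i => (x i : ℝ)) := by
  have hsle : univ.sup' hne (fun i => (((MeanTypeMap d M α)^[N] x) i : ℝ)) ≤
      univ.sup' hne (fun i => (x i : ℝ)) := by
    have := dyn_sup_anti (α := α) hne hd hstrict x (Nat.zero_le N)
    simpa using this
  have hile : univ.inf' hne (fun i => (x i : ℝ)) ≤
      univ.inf' hne (fun i => (((MeanTypeMap d M α)^[N] x) i : ℝ)) := by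
    have := dyn_inf_mono (α := α) hne hd hstrict x (Nat.zero_le N)
    simpa using this
  by_cases hseq : univ.sup' hne (fun i => (((MeanTypeMap d M α)^[N] x) i : ℝ)) =
      univ.sup' hne (fun i => (x i : ℝ))
  · obtain ⟨v, _, hv⟩ := Finset.exists_mem_eq_sup' hne
      (fun i => (((MeanTypeMap d M α)^[N] x) i : ℝ))
    have hxw : (x w₀ : ℝ) = univ.sup' hne (fun i => (x i : ℝ)) := by
      refine dyn_walk_sup hne hd hstrict N x v w₀ ?_ (hN w₀ hw₀ v)
      rw [← hseq, hv]
    have hine : univ.inf' hne (fun i => (((MeanTypeMap d M α)^[N] x) i : ℝ)) ≠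
        univ.inf' hne (fun i => (x i : ℝ)) := by
      intro heq
      obtain ⟨v', _, hv'⟩ := Finset.exists_mem_eq_inf' hne
        (fun i => (((MeanTypeMap d M α)^[N] x) i : ℝ))
      have hxw' : (x w₀ : ℝ) = univ.inf' hne (fun i => (x i : ℝ)) := by
        refine dyn_walk_inf hne hd hstrict N x v' w₀ ?_ (hN w₀ hw₀ v')
        rw [← heq, hv']
      rw [hxw] at hxw'
      exact absurd hxw'.symm (ne_of_lt hx)
    have : univ.inf' hne (fun i => (x i : ℝ)) <
        univ.inf' hne (fun i => (((MeanTypeMap d M α)^[N] x) i : ℝ)) :=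
      lt_of_le_of_ne hile (fun h => hine h.symm)
    linarith
  · have : univ.sup' hne (fun i => (((MeanTypeMap d M α)^[N] x) i : ℝ)) <
        univ.sup' hne (fun i => (x i : ℝ)) := lt_of_le_of_ne hsle hseq
    linarith

theorem dyn_cont (hcont : ∀ i, Continuous (M i)) :
    Continuous (MeanTypeMap d M α) :=
  continuous_pi fun i => (hcont i).comp (continuous_pi fun j => continuous_apply (α i j))

theorem dyn_osc_tendsto_zero (hI : I.OrdConnected)
    (hne : (Finset.univ : Finset (Fin p)).Nonempty)
    (hd : ∀ i, 0 < d i) (hstrict : ∀ i, IsStrictMeanOn I (M i))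
    (hcont : ∀ i, Continuous (M i))
    (w₀ : Fin p) (hw₀ : w₀ ∈ Root (IncidenceE d α)) (N : ℕ) (hNpos : 0 < N)
    (hN : ∀ w ∈ Root (IncidenceE d α), ∀ v, HasWalkOfLength (IncidenceE d α) w v N)
    (x : Fin p → I) :
    Tendsto (fun n => univ.sup' hne (fun i => (((MeanTypeMap d M α)^[n] x) i : ℝ)) -
      univ.inf' hne (fun i => (((MeanTypeMap d M α)^[n] x) i : ℝ)))
      atTop (nhds 0) := by
  set T := MeanTypeMap d M α with hT
  set S : ℕ → ℝ := fun n => univ.sup' hne (fun i => ((T^[n] x) i : ℝ)) with hSdef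
  set s : ℕ → ℝ := fun n => univ.inf' hne (fun i => ((T^[n] x) i : ℝ)) with hsdef
  have hSanti : Antitone S := dyn_sup_anti hne hd hstrict x
  have hsmono : Monotone s := dyn_inf_mono hne hd hstrict x
  have hss : ∀ n, s n ≤ S n := fun n => my_inf'_le_sup' hne _
  have hosc_anti : Antitone (fun n => S n - s n) :=
    fun m n hmn => sub_le_sub (hSanti hmn) (hsmono hmn)
  have hosc_nonneg : ∀ n, 0 ≤ S n - s n := fun n => sub_nonneg.mpr (hss n)
  have hbdd : BddBelow (Set.range (fun n => S n - s n)) := by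
    refine ⟨0, ?_⟩
    rintro z ⟨n, rfl⟩
    exact hosc_nonneg n
  have hL : Tendsto (fun n => S n - s n) atTop (nhds (⨅ n, S n - s n)) :=
    tendsto_atTop_ciInf hosc_anti hbdd
  set L := ⨅ n, S n - s n with hLdef
  have hL0 : 0 ≤ L := le_ciInf hosc_nonneg
  rcases eq_or_lt_of_le hL0 with hL0' | hLpos
  · rw [← hL0'] at hL
    exact hL
  exfalso
  -- compactness argument
  set a := s 0 with ha
  set b := S 0 with hb
  have hmemIcc : ∀ n i, ((T^[n] x) i : ℝ) ∈ Set.Icc a b := by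
    intro n i
    constructor
    · exact le_trans (hsmono (Nat.zero_le n))
        (Finset.inf'_le (fun i => (((T^[n] x) i : ℝ))) (mem_univ i))
    · exact le_trans (Finset.le_sup' (fun i => (((T^[n] x) i : ℝ))) (mem_univ i))
        (hSanti (Nat.zero_le n))
  have haI : a ∈ I := by
    obtain ⟨i₀, _, hi₀⟩ := Finset.exists_mem_eq_inf' hne (fun i => (x i : ℝ))
    have : a = ((x i₀ : ℝ)) := by
      rw [ha, hsdef]; simpa using hi₀
    rw [this]; exact (x i₀).2
  have hbI : b ∈ I := by
    obtain ⟨i₀, _, hi₀⟩ := Finset.exists_mem_eq_sup' hne (fun i => (x i : ℝ))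
    have : b = ((x i₀ : ℝ)) := by
      rw [hb, hSdef]; simpa using hi₀
    rw [this]; exact (x i₀).2
  have hIcc : Set.Icc a b ⊆ I := hI.out haI hbI
  set seq : ℕ → (Fin p → ℝ) := fun k i => ((T^[k * N] x) i : ℝ) with hseq
  have hmem : ∀ k, seq k ∈ Set.pi Set.univ (fun _ : Fin p => Set.Icc a b) :=
    fun k => fun i _ => hmemIcc (k * N) i
  obtain ⟨y, hy, φ, hφ, hconv⟩ :=
    (isCompact_univ_pi (fun _ : Fin p => isCompact_Icc)).tendsto_subseq hmem
  have hconv' : ∀ i, Tendsto (fun k => seq (φ k) i) atTop (nhds (y i)) :=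
    fun i => (tendsto_pi_nhds.mp hconv) i
  set ytil : Fin p → I := fun i => ⟨y i, hIcc (hy i (Set.mem_univ i))⟩ with hytil
  have hsup_conv : Tendsto (fun k => univ.sup' hne (fun i => seq (φ k) i)) atTop
      (nhds (univ.sup' hne y)) :=
    Filter.Tendsto.finset_sup'_nhds_apply hne (fun i _ => hconv' i)
  have hinf_conv : Tendsto (fun k => univ.inf' hne (fun i => seq (φ k) i)) atTop
      (nhds (univ.inf' hne y)) :=
    Filter.Tendsto.finset_inf'_nhds_apply hne (fun i _ => hconv' i)
  have hφatTop : Tendsto (fun k => φ k * N) atTop atTop := by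
    apply tendsto_atTop_mono (fun k => ?_) hφ.tendsto_atTop
    calc φ k = φ k * 1 := (mul_one _).symm
    _ ≤ φ k * N := Nat.mul_le_mul_left _ hNpos
  have hosc_sub : Tendsto (fun k => S (φ k * N) - s (φ k * N)) atTop (nhds L) :=
    hL.comp hφatTop
  have hosc_sub' : Tendsto (fun k => S (φ k * N) - s (φ k * N)) atTop
      (nhds (univ.sup' hne y - univ.inf' hne y)) := hsup_conv.sub hinf_conv
  have hoscy : univ.sup' hne y - univ.inf' hne y = L :=
    tendsto_nhds_unique hosc_sub' hosc_sub
  have hynonconst : univ.inf' hne (fun i => (ytil i : ℝ)) <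
      univ.sup' hne (fun i => (ytil i : ℝ)) := by
    have hcoe : (fun i => ((ytil i : ℝ))) = y := rfl
    rw [hcoe]
    have : univ.inf' hne y ≤ univ.sup' hne y := my_inf'_le_sup' hne _
    rcases lt_or_eq_of_le this with h | h
    · exact h
    · exfalso
      rw [h, sub_self] at hoscy
      exact absurd hoscy (ne_of_lt hLpos)
  have hcontr := dyn_contract hne hd hstrict w₀ hw₀ N hN ytil hynonconst
  -- now continuity
  have hTN : Continuous (T^[N]) := (dyn_cont hcont).iterate N
  set zk : ℕ → (Fin p → I) := fun k => T^[φ k * N] x with hzk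
  have hz : Tendsto zk atTop (nhds ytil) := by
    rw [tendsto_pi_nhds]
    intro i
    rw [tendsto_subtype_rng]
    exact hconv' i
  have hz2 : Tendsto (fun k => T^[N] (zk k)) atTop (nhds (T^[N] ytil)) :=
    (hTN.tendsto ytil).comp hz
  have hz3 : ∀ i, Tendsto (fun k => ((T^[N] (zk k)) i : ℝ)) atTop
      (nhds (((T^[N] ytil) i : ℝ))) := by
    intro i
    have := (tendsto_pi_nhds.mp hz2) i
    rwa [tendsto_subtype_rng] at this
  have hiter : ∀ k, T^[φ k * N + N] x = T^[N] (zk k) := by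
    intro k
    rw [Nat.add_comm, Function.iterate_add_apply]
  have key : Tendsto (fun k => S (φ k * N + N) - s (φ k * N + N)) atTop
      (nhds ((univ.sup' hne fun i => ((T^[N] ytil) i : ℝ)) -
        univ.inf' hne fun i => ((T^[N] ytil) i : ℝ))) := by
    have hs1 := Filter.Tendsto.finset_sup'_nhds_apply hne (fun i _ => hz3 i)
    have hs2 := Filter.Tendsto.finset_inf'_nhds_apply hne (fun i _ => hz3 i)
    refine (hs1.sub hs2).congr fun k => ?_
    rw [hSdef, hsdef]
    simp only
    rw [hiter k]
  have key2 : Tendsto (fun k => S (φ k * N + N) - s (φ k * N + N)) atTop (nhds L) :=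
    hL.comp (tendsto_atTop_mono (fun k => Nat.le_add_right _ _) hφatTop)
  have huniq := tendsto_nhds_unique key key2
  rw [← hT] at hcontr
  have hcoe : (fun i => ((ytil i : ℝ))) = y := rfl
  rw [hcoe, hoscy] at hcontr
  exact absurd huniq (ne_of_lt hcontr)

end Dyn2

/-- Main theorem: if `𝐌 = (M₁,…,M_p)` is a `d`-averaging mapping on an interval `I` with
all `Mᵢ` continuous and strict, and the root graph `𝓡(G_α)` is ergodic, then there is a
unique `𝐌_α`-invariant mean `K_α`; it is continuous, the iterates `𝐌_αⁿ` converge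
pointwise to `𝐊_α = (K_α,…,K_α)`, and `K_α` depends only on the root coordinates:
`K_α(x) = K_α*(xᵢ : i ∈ R(G_α))` for some mean `K_α*`. -/
theorem stmt_12 {I : Set ℝ} (hI : I.OrdConnected) {p : ℕ} (hp : 0 < p)
    (d : Fin p → ℕ) (hd : ∀ i, 0 < d i)
    (M : ∀ i, (Fin (d i) → I) → I)
    (hstrict : ∀ i, IsStrictMeanOn I (M i)) (hcont : ∀ i, Continuous (M i))
    (α : ∀ i, Fin (d i) → Fin p)
    (herg : IsErgodic
      (fun a b : (Root (IncidenceE d α) : Set (Fin p)) => IncidenceE d α a b)) :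
    ∃ K : (Fin p → I) → I, IsMeanOn I K ∧ Continuous K ∧
      (∀ x, K (MeanTypeMap d M α x) = K x) ∧
      (∀ L : (Fin p → I) → I, IsMeanOn I L → (∀ x, L (MeanTypeMap d M α x) = L x) → L = K) ∧
      (∀ (x : Fin p → I) (i : Fin p),
        Filter.Tendsto (fun n => (((MeanTypeMap d M α)^[n] x) i : ℝ))
          Filter.atTop (nhds (K x))) ∧
      (∃ K' : ((Root (IncidenceE d α) : Set (Fin p)) → I) → I, IsMeanOn I K' ∧
        ∀ x : Fin p → I, K x = K' (fun i => x i)) := by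
  classical
  have hne : (Finset.univ : Finset (Fin p)).Nonempty := ⟨⟨0, hp⟩, Finset.mem_univ _⟩
  obtain ⟨hV', hirr, haper⟩ := herg
  obtain ⟨N₀, hN₀⟩ := ergodic_uniform_walk hirr haper
  have w₀ : (Root (IncidenceE d α) : Set (Fin p)) := Classical.choice hV'
  have hreach : ∀ v : Fin p, ∃ r, r ∈ Root (IncidenceE d α) ∧
      Reaches (IncidenceE d α) r v := by
    intro v
    obtain ⟨r, hr, hrr⟩ := exists_root_reaches (E := IncidenceE d α) v
    exact ⟨r, hr, hrr⟩
  choose rv hrv hrvreach using hreach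
  choose Lv hLv using fun v => exists_hwol_of_reaches (hrvreach v)
  set N := N₀ + Finset.univ.sup Lv + 1 with hNdef
  have hNpos : 0 < N := by omega
  have hN : ∀ w ∈ Root (IncidenceE d α), ∀ v, HasWalkOfLength (IncidenceE d α) w v N := by
    intro w hw v
    have hLvle : Lv v ≤ Finset.univ.sup Lv := Finset.le_sup (Finset.mem_univ v)
    have h1 := hN₀ ⟨w, hw⟩ ⟨rv v, hrv v⟩ (N - Lv v) (by omega)
    obtain ⟨f, hf0, hfn, hfe⟩ := h1
    have h2 : HasWalkOfLength (IncidenceE d α) w (rv v) (N - Lv v) :=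
      ⟨fun i => ↑(f i), by show ((f 0 : _) : Fin p) = w; rw [hf0],
        by show ((f (N - Lv v) : _) : Fin p) = rv v; rw [hfn], fun i hi => hfe i hi⟩
    have h3 := hwol_concat h2 (hLv v)
    have heq : N - Lv v + Lv v = N := by omega
    rwa [heq] at h3
  set T := MeanTypeMap d M α with hTdef
  set S : (Fin p → I) → ℕ → ℝ :=
    fun x n => Finset.univ.sup' hne (fun i => ((T^[n] x) i : ℝ)) with hSdef
  set s : (Fin p → I) → ℕ → ℝ :=
    fun x n => Finset.univ.inf' hne (fun i => ((T^[n] x) i : ℝ)) with hsdef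
  have hSanti : ∀ x, Antitone (S x) := fun x => dyn_sup_anti hne hd hstrict x
  have hsmono : ∀ x, Monotone (s x) := fun x => dyn_inf_mono hne hd hstrict x
  have hss : ∀ x n, s x n ≤ S x n := fun x n => my_inf'_le_sup' hne _
  have hOsc : ∀ x, Filter.Tendsto (fun n => S x n - s x n) Filter.atTop (nhds 0) :=
    fun x => dyn_osc_tendsto_zero hI hne hd hstrict hcont ↑w₀ w₀.2 N hNpos hN x
  have hbdd : ∀ x, BddBelow (Set.range (S x)) := by
    intro x
    refine ⟨s x 0, ?_⟩
    rintro z ⟨n, rfl⟩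
    exact le_trans (hsmono x (Nat.zero_le n)) (hss x n)
  set c : (Fin p → I) → ℝ := fun x => ⨅ n, S x n with hcdef
  have hSc : ∀ x, Filter.Tendsto (S x) Filter.atTop (nhds (c x)) :=
    fun x => tendsto_atTop_ciInf (hSanti x) (hbdd x)
  have hsc : ∀ x, Filter.Tendsto (s x) Filter.atTop (nhds (c x)) := by
    intro x
    have := (hSc x).sub (hOsc x)
    rw [sub_zero] at this
    exact this.congr fun n => by ring
  have hclb : ∀ x n, s x n ≤ c x := fun x => (hsmono x).ge_of_tendsto (hsc x)
  have hcub : ∀ x n, c x ≤ S x n := fun x => (hSanti x).le_of_tendsto (hSc x)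
  have hS0 : ∀ x, S x 0 = Finset.univ.sup' hne (fun i => (x i : ℝ)) := by
    intro x; rw [hSdef]; simp
  have hs0 : ∀ x, s x 0 = Finset.univ.inf' hne (fun i => (x i : ℝ)) := by
    intro x; rw [hsdef]; simp
  have hcI : ∀ x, c x ∈ I := by
    intro x
    obtain ⟨i₀, _, hi₀⟩ := Finset.exists_mem_eq_inf' hne (fun i => (x i : ℝ))
    obtain ⟨i₁, _, hi₁⟩ := Finset.exists_mem_eq_sup' hne (fun i => (x i : ℝ))
    have h1 : ((x i₀ : ℝ)) ≤ c x := by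
      rw [← hi₀, ← hs0]; exact hclb x 0
    have h2 : c x ≤ ((x i₁ : ℝ)) := by
      rw [← hi₁, ← hS0]; exact hcub x 0
    exact hI.out (x i₀).2 (x i₁).2 ⟨h1, h2⟩
  have hKlim : ∀ (x : Fin p → I) (i : Fin p),
      Filter.Tendsto (fun n => ((T^[n] x) i : ℝ)) Filter.atTop (nhds (c x)) := by
    intro x i
    refine tendsto_of_tendsto_of_tendsto_of_le_of_le (hsc x) (hSc x) ?_ ?_
    · intro n
      show Finset.univ.inf' hne (fun j => (((T^[n] x) j : ℝ))) ≤ ((T^[n] x) i : ℝ)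
      exact Finset.inf'_le (fun j => (((T^[n] x) j : ℝ))) (Finset.mem_univ i)
    · intro n
      show ((T^[n] x) i : ℝ) ≤ Finset.univ.sup' hne (fun j => (((T^[n] x) j : ℝ)))
      exact Finset.le_sup' (fun j => (((T^[n] x) j : ℝ))) (Finset.mem_univ i)
  refine ⟨fun x => ⟨c x, hcI x⟩, ?_, ?_, ?_, ?_, ?_, ?_⟩
  · -- IsMeanOn
    intro x h
    constructor
    · have := hclb x 0
      rw [hs0] at this
      exact this
    · have := hcub x 0
      rw [hS0] at this
      exact this
  · -- Continuous
    have hccont : Continuous c := by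
      rw [continuous_iff_continuousAt]
      intro x
      rw [Metric.continuousAt_iff]
      intro ε hε
      obtain ⟨n, hn⟩ := ((hOsc x).eventually
        (gt_mem_nhds (by linarith : (0:ℝ) < ε/4))).exists
      have hG : Continuous (fun y : Fin p → I => (fun i => ((T^[n] y) i : ℝ))) :=
        continuous_pi fun i => continuous_subtype_val.comp
          ((continuous_apply i).comp ((dyn_cont hcont).iterate n))
      have hGx := hG.continuousAt (x := x)
      rw [Metric.continuousAt_iff] at hGx
      obtain ⟨δ, hδ, hball⟩ := hGx (ε/4) (by linarith)
      refine ⟨δ, hδ, fun y hy => ?_⟩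
      have hco := hball hy
      have hcoord : ∀ i, |((T^[n] y) i : ℝ) - ((T^[n] x) i : ℝ)| < ε/4 := by
        intro i
        have h8 := dist_le_pi_dist (fun i => ((T^[n] y) i : ℝ))
          (fun i => ((T^[n] x) i : ℝ)) i
        rw [Real.dist_eq] at h8
        exact lt_of_le_of_lt h8 hco
      have h1 : c y ≤ S y n := hcub y n
      have h2 : S y n ≤ S x n + ε/4 := by
        show Finset.univ.sup' hne (fun i => ((T^[n] y) i : ℝ)) ≤ S x n + ε/4
        apply Finset.sup'_le
        intro i _
        have h3 : ((T^[n] x) i : ℝ) ≤ S x n :=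
          Finset.le_sup' (fun j => (((T^[n] x) j : ℝ))) (Finset.mem_univ i)
        have h4 := (abs_lt.mp (hcoord i)).2
        linarith
      have h3 : s x n - ε/4 ≤ s y n := by
        show s x n - ε/4 ≤ Finset.univ.inf' hne (fun i => ((T^[n] y) i : ℝ))
        apply Finset.le_inf'
        intro i _
        have h4 : s x n ≤ ((T^[n] x) i : ℝ) :=
          Finset.inf'_le (fun j => (((T^[n] x) j : ℝ))) (Finset.mem_univ i)
        have h5 := (abs_lt.mp (hcoord i)).1
        linarith
      have h5 : s y n ≤ c y := hclb y n
      have h6 : s x n ≤ c x := hclb x n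
      have h7 : c x ≤ S x n := hcub x n
      rw [Real.dist_eq, abs_lt]
      constructor <;> linarith
    exact hccont.subtype_mk hcI
  · -- Invariance
    intro x
    apply Subtype.ext
    show c (T x) = c x
    have h1 := hKlim (T x) ⟨0, hp⟩
    have h2 : Filter.Tendsto (fun n => ((T^[n] (T x)) ⟨0, hp⟩ : ℝ))
        Filter.atTop (nhds (c x)) := by
      have h3 := (hKlim x ⟨0, hp⟩).comp (Filter.tendsto_add_atTop_nat 1)
      refine h3.congr fun k => ?_
      simp only [Function.comp_apply]
      rw [Function.iterate_succ_apply]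
    exact tendsto_nhds_unique h1 h2
  · -- Uniqueness
    intro L hLmean hLinv
    funext x
    apply Subtype.ext
    show (L x : ℝ) = c x
    have hLn : ∀ n, L (T^[n] x) = L x := by
      intro n
      induction n with
      | zero => simp
      | succ k ih => rw [Function.iterate_succ_apply', hLinv, ih]
    have hub : ∀ n, (L x : ℝ) ≤ S x n := by
      intro n
      have := (hLmean (T^[n] x) hne).2
      rw [hLn n] at this
      exact this
    have hlb : ∀ n, s x n ≤ (L x : ℝ) := by
      intro n
      have := (hLmean (T^[n] x) hne).1
      rw [hLn n] at this
      exact this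
    have h1 : (L x : ℝ) ≤ c x :=
      ge_of_tendsto (hSc x) (Filter.Eventually.of_forall hub)
    have h2 : c x ≤ (L x : ℝ) :=
      le_of_tendsto (hsc x) (Filter.Eventually.of_forall hlb)
    exact le_antisymm h1 h2
  · -- Tendsto
    exact fun x i => hKlim x i
  · -- K'
    have hrootdep : ∀ x y : Fin p → I,
        (∀ w, w ∈ Root (IncidenceE d α) → x w = y w) → c x = c y := by
      intro x y hxy
      have hiter : ∀ n w, w ∈ Root (IncidenceE d α) → T^[n] x w = T^[n] y w := by
        intro n
        induction n with
        | zero => intro w hw; simpa using hxy w hw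
        | succ k ih =>
          intro w hw
          rw [Function.iterate_succ_apply', Function.iterate_succ_apply']
          show M w (fun j => (T^[k] x) (α w j)) = M w (fun j => (T^[k] y) (α w j))
          congr 1
          funext j
          exact ih (α w j) (root_closed_pred hw ⟨j, rfl⟩)
      have h1 := hKlim x ↑w₀
      have h2 : Filter.Tendsto (fun n => ((T^[n] x) ↑w₀ : ℝ))
          Filter.atTop (nhds (c y)) := by
        refine (hKlim y ↑w₀).congr fun n => ?_
        rw [hiter n ↑w₀ w₀.2]
      exact tendsto_nhds_unique h1 h2
    set ext : ((Root (IncidenceE d α) : Set (Fin p)) → I) → (Fin p → I) :=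
      fun u i => if h : i ∈ Root (IncidenceE d α) then u ⟨i, h⟩ else u w₀ with hext
    refine ⟨fun u => ⟨c (ext u), hcI (ext u)⟩, ?_, ?_⟩
    · intro u h
      constructor
      · have h1 := hclb (ext u) 0
        rw [hs0] at h1
        refine le_trans ?_ h1
        apply Finset.le_inf'
        intro i _
        show Finset.univ.inf' h (fun w => ((u w : ℝ))) ≤ ((ext u i : ℝ))
        by_cases hi : i ∈ Root (IncidenceE d α)
        · have : ext u i = u ⟨i, hi⟩ := dif_pos hi
          rw [this]
          exact Finset.inf'_le (fun w => ((u w : ℝ))) (Finset.mem_univ ⟨i, hi⟩)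
        · have : ext u i = u w₀ := dif_neg hi
          rw [this]
          exact Finset.inf'_le (fun w => ((u w : ℝ))) (Finset.mem_univ w₀)
      · have h1 := hcub (ext u) 0
        rw [hS0] at h1
        refine le_trans h1 ?_
        apply Finset.sup'_le
        intro i _
        show ((ext u i : ℝ)) ≤ Finset.univ.sup' h (fun w => ((u w : ℝ)))
        by_cases hi : i ∈ Root (IncidenceE d α)
        · have : ext u i = u ⟨i, hi⟩ := dif_pos hi
          rw [this]
          exact Finset.le_sup' (fun w => ((u w : ℝ))) (Finset.mem_univ ⟨i, hi⟩)
        · have : ext u i = u w₀ := dif_neg hi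
          rw [this]
          exact Finset.le_sup' (fun w => ((u w : ℝ))) (Finset.mem_univ w₀)
    · intro x
      apply Subtype.ext
      show c x = c (ext (fun i => x ↑i))
      apply hrootdep
      intro w hw
      show x w = ext (fun i => x ↑i) w
      have : ext (fun i => x ↑i) w = x w := dif_pos hw
      rw [this]
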